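/- Let G be a directed graph with nonnegative rational arc weights, let s1 and u be distinct vertices, let v be an out-neighbor of u with w(u,v) ≤ α2, and let α1, α2 ∈ ℚ≥0. Then there exists a pair of compatible paths for s1 and u with bounds α1, α2 in G whose second path starts with the arc (u,v) if and only if there exists a vertex t in G − u (the graph obtained by deleting u and all arcs incident to it) such that d_{G−u}(s1,t) ≤ α1 and d_{G−u}(v,t) ≤ α2 − w(u,v). -/

import Mathlib

/-- `l` is a simple path (no repeated vertices) from `x` to `y` in the directed
graph with vertex set `S` and arc relation `A`, given as its list of vertices. -/
def IsPathOn {V : Type*} (S : Set V) (A : V → V → Prop) (x y : V) (l : List V) : Prop :=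
  (∀ v ∈ l, v ∈ S) ∧ l.Chain' A ∧ l.Nodup ∧ l.head? = some x ∧ l.getLast? = some y

/-- The length of a path (given by its vertex list) w.r.t. arc weights `w`:
the sum of the weights of its arcs. -/
def pathLen {V : Type*} (w : V → V → ℚ) (l : List V) : ℚ :=
  ((l.zip l.tail).map fun p => w p.1 p.2).sum

/-- `d_{(S,A)}(x,y) ≤ α`: there is a path from `x` to `y` of length at most `α`
in the graph with vertex set `S` and arcs `A`.  (On a finite graph, this is
equivalent to the shortest-path distance being at most `α`.) -/
def distLEOn {V : Type*} (S : Set V) (A : V → V → Prop) (w : V → V → ℚ)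
    (x y : V) (α : ℚ) : Prop :=
  ∃ l, IsPathOn S A x y l ∧ pathLen w l ≤ α

/-! The second path of a compatible pair, stripped of its first arc `(u, v)`, is a path of `G - u`
from `v`, and the first path avoids `u` because `u ≠ t` lies on the second one. Conversely, given
paths `s1 ⇝ t` and `v ⇝ t` in `G - u`, cut both at the first vertex `t'` of the second path that
lies on the first: the two prefixes meet only in `t'`, and prepending `u` to the second one gives
the compatible pair. With nonnegative weights, prefixes are no longer than the whole path. -/

theorem List.exists_eq_append_cons_of_first {α : Type*} {P : α → Prop} {l : List α}
    (h : ∃ x ∈ l, P x) : ∃ pre t suf, l = pre ++ t :: suf ∧ P t ∧ ∀ x ∈ pre, ¬ P x := by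
  classical
  obtain ⟨t, ht⟩ : ∃ t, l.find? (fun x => decide (P x)) = some t :=
    Option.ne_none_iff_exists'.mp fun hnone => by
      obtain ⟨x, hx, hPx⟩ := h
      simpa [hPx] using List.find?_eq_none.mp hnone x hx
  obtain ⟨hPt, pre, suf, rfl, hpre⟩ := List.find?_eq_some_iff_append.mp ht
  exact ⟨pre, t, suf, rfl, by simpa using hPt, fun x hx => by simpa using hpre x hx⟩

section Paths

variable {V : Type*} {S : Set V} {A : V → V → Prop} {w : V → V → ℚ} {x y z : V}

@[simp]
theorem pathLen_cons_cons (a b : V) (l : List V) :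
    pathLen w (a :: b :: l) = w a b + pathLen w (b :: l) := by
  simp [pathLen]

theorem pathLen_nonneg : ∀ {l : List V}, l.IsChain (fun a b => 0 ≤ w a b) → 0 ≤ pathLen w l
  | [], _ | [_], _ => le_rfl
  | a :: b :: l, h => by
    rw [List.isChain_cons_cons] at h
    rw [pathLen_cons_cons]
    exact add_nonneg h.1 (pathLen_nonneg h.2)

theorem pathLen_le_of_prefix :
    ∀ {p l : List V}, l.IsChain (fun a b => 0 ≤ w a b) → p <+: l → pathLen w p ≤ pathLen w l
  | [], _, h, _ | [_], _, h, _ => pathLen_nonneg h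
  | a :: b :: p, _, h, ⟨s, hs⟩ => by
    subst hs
    simp only [List.cons_append, List.isChain_cons_cons] at h ⊢
    simpa using pathLen_le_of_prefix h.2 (List.prefix_append (b :: p) s)

theorem IsPathOn.mono {T : Set V} (hST : S ⊆ T) {l : List V} (h : IsPathOn S A x y l) :
    IsPathOn T A x y l :=
  ⟨fun a ha => hST (h.1 a ha), h.2⟩

theorem IsPathOn.eq_cons {l : List V} (h : IsPathOn S A x y l) : ∃ tl, l = x :: tl :=
  List.head?_eq_some_iff.mp h.2.2.2.1

theorem IsPathOn.mem_last {l : List V} (h : IsPathOn S A x y l) : y ∈ l :=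
  List.mem_of_getLast? h.2.2.2.2

theorem IsPathOn.prefix_to {p s : List V} (h : IsPathOn S A x y (p ++ z :: s)) :
    IsPathOn S A x z (p ++ [z]) := by
  obtain ⟨hS, hchain, hnodup, hhead, -⟩ := h
  have hpre : p ++ [z] <+: p ++ z :: s := ⟨s, by simp⟩
  refine ⟨fun a ha => hS a (hpre.subset ha), hchain.prefix hpre, hnodup.sublist hpre.sublist,
    by cases p <;> simpa using hhead, List.getLast?_concat⟩

theorem isPathOn_cons_cons {rest : List V} :
    IsPathOn S A x z (x :: y :: rest) ↔
      x ∈ S ∧ A x y ∧ x ∉ y :: rest ∧ IsPathOn S A y z (y :: rest) := by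
  constructor
  · rintro ⟨hS, hchain, hnodup, -, hlast⟩
    replace hchain := List.isChain_cons_cons.mp hchain
    rw [List.nodup_cons] at hnodup
    exact ⟨hS x List.mem_cons_self, hchain.1, hnodup.1,
      ⟨fun a ha => hS a (List.mem_cons_of_mem x ha), hchain.2, hnodup.2, rfl, hlast⟩⟩
  · rintro ⟨hx, hxy, hxy', hS, hchain, hnodup, -, hlast⟩
    exact ⟨List.forall_mem_cons.mpr ⟨hx, hS⟩, List.isChain_cons_cons.mpr ⟨hxy, hchain⟩,
      List.nodup_cons.mpr ⟨hxy', hnodup⟩, rfl, hlast⟩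

theorem exists_compatible_of_isPathOn_compl {u v s1 t : V} {l1 l2 : List V}
    (hw : ∀ a b, A a b → 0 ≤ w a b) (huv : A u v)
    (h1 : IsPathOn {x | x ≠ u} A s1 t l1) (h2 : IsPathOn {x | x ≠ u} A v t l2) :
    ∃ (t' : V) (p1 rest : List V),
      IsPathOn Set.univ A s1 t' p1 ∧ IsPathOn Set.univ A u t' (u :: v :: rest) ∧
      (∀ x, x ∈ p1 → x ∈ u :: v :: rest → x = t') ∧
      pathLen w p1 ≤ pathLen w l1 ∧ pathLen w (u :: v :: rest) ≤ w u v + pathLen w l2 := by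
  obtain ⟨pre, t', suf, rfl, ht'1, hpre⟩ :=
    List.exists_eq_append_cons_of_first ⟨t, h2.mem_last, h1.mem_last⟩
  obtain ⟨q, r, rfl⟩ := List.append_of_mem ht'1
  have hq : q ++ [t'] <+: q ++ t' :: r := ⟨r, by simp⟩
  have hp2 := h2.prefix_to
  obtain ⟨rest, hrest⟩ := hp2.eq_cons
  rw [hrest] at hp2
  refine ⟨t', q ++ [t'], rest, h1.prefix_to.mono (Set.subset_univ _),
    isPathOn_cons_cons.mpr ⟨trivial, huv, fun hu => hp2.1 u hu rfl, hp2.mono (Set.subset_univ _)⟩,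
    fun a ha1 ha2 => ?_, pathLen_le_of_prefix (h1.2.1.imp hw) hq, ?_⟩
  · rcases List.mem_cons.mp ha2 with rfl | ha2
    · exact absurd rfl (h1.1 _ (hq.subset ha1))
    · rw [← hrest, List.mem_append, List.mem_singleton] at ha2
      exact ha2.resolve_left fun hpre' => hpre a hpre' (hq.subset ha1)
  · rw [pathLen_cons_cons, ← hrest]
    exact add_le_add_right (pathLen_le_of_prefix (h2.2.1.imp hw) ⟨suf, by simp⟩) _

end Paths

theorem stmt4_general {V : Type*} (A : V → V → Prop) (w : V → V → ℚ)
    (hw : ∀ u v, A u v → 0 ≤ w u v)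
    (s1 u : V) (v : V) (huv : A u v)
    (α1 α2 : ℚ) :
    (∃ (t : V) (p1 rest : List V),
        IsPathOn Set.univ A s1 t p1 ∧
        IsPathOn Set.univ A u t (u :: v :: rest) ∧
        (∀ x, x ∈ p1 → x ∈ u :: v :: rest → x = t) ∧
        pathLen w p1 ≤ α1 ∧ pathLen w (u :: v :: rest) ≤ α2) ↔
      ∃ t : V, t ≠ u ∧ distLEOn {x : V | x ≠ u} A w s1 t α1 ∧
        distLEOn {x : V | x ≠ u} A w v t (α2 - w u v) := by
  constructor
  · rintro ⟨t, p1, rest, h1, h2, hcompat, hlen1, hlen2⟩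
    obtain ⟨-, -, hu, h2⟩ := isPathOn_cons_cons.mp h2
    have htu : t ≠ u := fun htu => hu (htu ▸ h2.mem_last)
    refine ⟨t, htu, ⟨p1, ⟨fun a ha hau => htu ?_, h1.2⟩, hlen1⟩,
      ⟨v :: rest, ⟨fun a ha hau => hu (hau ▸ ha), h2.2⟩, ?_⟩⟩
    · exact (hcompat a ha (hau ▸ List.mem_cons_self)).symm.trans hau
    · rw [pathLen_cons_cons] at hlen2
      linarith
  · rintro ⟨t, -, ⟨l1, h1, hlen1⟩, ⟨l2, h2, hlen2⟩⟩
    obtain ⟨t', p1, rest, hp1, hp2, hcompat, hle1, hle2⟩ :=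
      exists_compatible_of_isPathOn_compl hw huv h1 h2
    exact ⟨t', p1, rest, hp1, hp2, hcompat, hle1.trans hlen1, by linarith⟩

/-- For `s1 ≠ u` and an out-neighbor `v` of `u` with `w(u,v) ≤ α2`: there is a
pair of compatible paths for `s1` and `u` with bounds `α1, α2` in `G` whose
second path starts with the arc `(u,v)`, iff there is a vertex `t` of `G - u`
with `d_{G-u}(s1,t) ≤ α1` and `d_{G-u}(v,t) ≤ α2 - w(u,v)`. -/
theorem stmt4 {V : Type*} [Fintype V] (A : V → V → Prop) (w : V → V → ℚ)
    (hw : ∀ u v, A u v → 0 ≤ w u v)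
    (s1 u : V) (hsu : s1 ≠ u) (v : V) (huv : A u v)
    (α1 α2 : ℚ) (hα1 : 0 ≤ α1) (hα2 : 0 ≤ α2) (hwv : w u v ≤ α2) :
    (∃ (t : V) (p1 rest : List V),
        IsPathOn Set.univ A s1 t p1 ∧
        IsPathOn Set.univ A u t (u :: v :: rest) ∧
        (∀ x, x ∈ p1 → x ∈ u :: v :: rest → x = t) ∧
        pathLen w p1 ≤ α1 ∧ pathLen w (u :: v :: rest) ≤ α2) ↔
      ∃ t : V, t ≠ u ∧ distLEOn {x : V | x ≠ u} A w s1 t α1 ∧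
        distLEOn {x : V | x ≠ u} A w v t (α2 - w u v) :=
  stmt4_general A w hw s1 u v huv α1 α2
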